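/- arXiv:1812.10146 — 4 statements merged into one kernel-verified Lean document; each statement's English description precedes it below -/
import Mathlib

section
/- For any two timed automata A¹ and A² over a common alphabet Σ, the synchronous product A¹ × A² (whose locations are pairs of locations, whose transitions combine guards by conjunction and reset sets by union, and whose generalized Büchi condition is the union of the lifted conditions) accepts exactly the intersection of the timed languages: ⟦A¹ × A²⟧ = ⟦A¹⟧ ∩ ⟦A²⟧. -/
open scoped Classical

/-- A timed word: non-decreasing, non-negative, unbounded (non-Zeno) timestamps. -/
structure TimedWord (α : Type*) where
  sym : ℕ → α
  tm  : ℕ → ℝ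
  nonneg : ∀ i, 0 ≤ tm i
  mono : Monotone tm
  nonZeno : ∀ r : ℝ, ∃ j, r ≤ tm j

/-- Clock constraints over a set of clocks `X`: g := ⊤ | g ∧ g | x ⋈ c. -/
inductive Guard (X : Type*) where
  | top : Guard X
  | and (g₁ g₂ : Guard X) : Guard X
  | le (x : X) (c : ℕ) : Guard X
  | lt (x : X) (c : ℕ) : Guard X
  | ge (x : X) (c : ℕ) : Guard X
  | gt (x : X) (c : ℕ) : Guard X

def Guard.sat {X : Type*} (v : X → ℝ) : Guard X → Prop
  | .top => True
  | .and g₁ g₂ => g₁.sat v ∧ g₂.sat v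
  | .le x c => v x ≤ (c : ℝ)
  | .lt x c => v x < (c : ℝ)
  | .ge x c => (c : ℝ) ≤ v x
  | .gt x c => (c : ℝ) < v x

def Guard.map {X Y : Type*} (f : X → Y) : Guard X → Guard Y
  | .top => .top
  | .and g₁ g₂ => .and (g₁.map f) (g₂.map f)
  | .le x c => .le (f x) c
  | .lt x c => .lt (f x) c
  | .ge x c => .ge (f x) c
  | .gt x c => .gt (f x) c

/-- A timed automaton over alphabet `α`, with locations `S`, clocks `X`, a transition
relation and a generalized Büchi acceptance condition (a set of sets of locations). -/
structure TA (S X α : Type*) where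
  init : S
  trans : Set (S × α × Guard X × Set X × S)
  acc : Set (Set S)

/-- Timestamp just before reading event `i` (events are read at their timestamps). -/
def prevT {α : Type*} (ρ : TimedWord α) : ℕ → ℝ
  | 0 => 0
  | i + 1 => ρ.tm i

noncomputable def resetVal {X : Type*} (v : X → ℝ) (lam : Set X) : X → ℝ :=
  fun x => if x ∈ lam then 0 else v x

/-- A run of a TA on a timed word: starts in the initial location with the zero valuation;
at each step, time elapses, a guard is checked, and the reset clocks are set to 0. -/
structure TARun {S X α : Type*} (A : TA S X α) (ρ : TimedWord α) where
  loc : ℕ → S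
  val : ℕ → X → ℝ
  init_loc : loc 0 = A.init
  init_val : val 0 = fun _ => 0
  step : ∀ i, ∃ g lam,
    (loc i, ρ.sym i, g, lam, loc (i + 1)) ∈ A.trans ∧
    Guard.sat (fun x => val i x + (ρ.tm i - prevT ρ i)) g ∧
    val (i + 1) = resetVal (fun x => val i x + (ρ.tm i - prevT ρ i)) lam

/-- Generalized Büchi acceptance: for each accepting set, some location of the set is
visited infinitely often. -/
def TARun.Accepting {S X α : Type*} {A : TA S X α} {ρ : TimedWord α}
    (r : TARun A ρ) : Prop :=
  ∀ F ∈ A.acc, ∃ s ∈ F, ∀ N, ∃ m, N ≤ m ∧ r.loc m = s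

/-- The timed language of a TA. -/
def TALang {S X α : Type*} (A : TA S X α) : Set (TimedWord α) :=
  {ρ | ∃ r : TARun A ρ, r.Accepting}

/-- Synchronous product of two TAs: locations are pairs, guards are combined by
conjunction, reset sets by union, and the generalized Büchi condition is the union
of the lifted conditions. -/
def TAProd {S₁ X₁ S₂ X₂ α : Type*} (A₁ : TA S₁ X₁ α) (A₂ : TA S₂ X₂ α) :
    TA (S₁ × S₂) (X₁ ⊕ X₂) α where
  init := (A₁.init, A₂.init)
  trans := {t | ∃ s₁ s₁' s₂ s₂' σ g₁ g₂, ∃ (lam₁ : Set X₁) (lam₂ : Set X₂),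
    (s₁, σ, g₁, lam₁, s₁') ∈ A₁.trans ∧ (s₂, σ, g₂, lam₂, s₂') ∈ A₂.trans ∧
    t = ((s₁, s₂), σ, Guard.and (g₁.map Sum.inl) (g₂.map Sum.inr),
         (Sum.inl '' lam₁ ∪ Sum.inr '' lam₂ : Set (X₁ ⊕ X₂)), (s₁', s₂'))}
  acc := {F | (∃ F₁ ∈ A₁.acc, F = F₁ ×ˢ (Set.univ : Set S₂)) ∨
              (∃ F₂ ∈ A₂.acc, F = (Set.univ : Set S₁) ×ˢ F₂)}


lemma guard_sat_map {X Y : Type*} (f : X → Y) (v : Y → ℝ) (g : Guard X) :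
    Guard.sat v (g.map f) ↔ Guard.sat (fun x => v (f x)) g := by
  induction g <;> simp [Guard.map, Guard.sat, *]

lemma exists_infinite_fiber' {β : Type*} [Finite β] (f : ℕ → β) (M : Set ℕ)
    (hM : M.Infinite) : ∃ b, {m | m ∈ M ∧ f m = b}.Infinite := by
  by_contra h
  push_neg at h
  have : M ⊆ ⋃ b, {m | m ∈ M ∧ f m = b} := fun m hm => Set.mem_iUnion.2 ⟨f m, hm, rfl⟩
  exact hM ((Set.finite_iUnion h).subset this)

lemma infinite_of_freq {P : ℕ → Prop} (h : ∀ N, ∃ m, N ≤ m ∧ P m) :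
    {m | P m}.Infinite := by
  rw [Set.infinite_coe_iff.symm]
  rw [Set.infinite_coe_iff]
  intro hfin
  obtain ⟨N, hN⟩ := hfin.bddAbove
  obtain ⟨m, hm, hPm⟩ := h (N + 1)
  exact absurd (hN hPm) (by omega)

lemma freq_of_infinite {P : ℕ → Prop} (h : {m | P m}.Infinite) :
    ∀ N, ∃ m, N ≤ m ∧ P m := by
  intro N
  obtain ⟨m, hm, hmN⟩ := h.exists_gt N
  exact ⟨m, hmN.le, hm⟩

/-- The product of two timed automata accepts exactly the intersection of their
timed languages: ⟦A¹ × A²⟧ = ⟦A¹⟧ ∩ ⟦A²⟧. -/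
theorem taProd_lang {S₁ X₁ S₂ X₂ α : Type*} (A₁ : TA S₁ X₁ α) (A₂ : TA S₂ X₂ α)
    [Finite S₁] [Finite S₂] [Finite X₁] [Finite X₂]
    (h₁ : A₁.acc.Finite) (h₂ : A₂.acc.Finite) :
    TALang (TAProd A₁ A₂) = TALang A₁ ∩ TALang A₂ := by
  ext ρ
  constructor
  · rintro ⟨r, hr⟩
    refine ⟨⟨⟨fun i => (r.loc i).1, fun i x => r.val i (Sum.inl x), ?_, ?_, ?_⟩, ?_⟩,
            ⟨⟨fun i => (r.loc i).2, fun i x => r.val i (Sum.inr x), ?_, ?_, ?_⟩, ?_⟩⟩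
    · show (r.loc 0).1 = A₁.init
      rw [r.init_loc]; rfl
    · show (fun x => r.val 0 (Sum.inl x)) = _
      rw [r.init_val]
    · intro i
      obtain ⟨g, lam, ht, hsat, hval⟩ := r.step i
      obtain ⟨s₁, s₁', s₂, s₂', σ, g₁, g₂, lam₁, lam₂, ht₁, ht₂, heq⟩ := ht
      injection heq with e1 e2
      injection e2 with e2 e3
      injection e3 with e3 e4
      injection e4 with e4 e5
      refine ⟨g₁, lam₁, ?_, ?_, ?_⟩
      · show ((r.loc i).1, ρ.sym i, g₁, lam₁, (r.loc (i+1)).1) ∈ A₁.trans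
        have ha : (r.loc i).1 = s₁ := by rw [e1]
        have hb : (r.loc (i+1)).1 = s₁' := by rw [e5]
        rw [ha, hb, e2]; exact ht₁
      · rw [e3] at hsat
        exact (guard_sat_map _ _ _).1 hsat.1
      · funext x
        show r.val (i+1) (Sum.inl x) = _
        rw [hval, e4]
        simp only [resetVal, Set.mem_union, Set.mem_image]
        by_cases hx : x ∈ lam₁ <;> simp [hx]
    · intro F₁ hF₁
      obtain ⟨s, hs, hinf⟩ := hr (F₁ ×ˢ (Set.univ : Set S₂)) (Or.inl ⟨F₁, hF₁, rfl⟩)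
      refine ⟨s.1, hs.1, fun N => ?_⟩
      obtain ⟨m, hm, he⟩ := hinf N
      exact ⟨m, hm, by show (r.loc m).1 = s.1; rw [he]⟩
    · show (r.loc 0).2 = A₂.init
      rw [r.init_loc]; rfl
    · show (fun x => r.val 0 (Sum.inr x)) = _
      rw [r.init_val]
    · intro i
      obtain ⟨g, lam, ht, hsat, hval⟩ := r.step i
      obtain ⟨s₁, s₁', s₂, s₂', σ, g₁, g₂, lam₁, lam₂, ht₁, ht₂, heq⟩ := ht
      injection heq with e1 e2
      injection e2 with e2 e3
      injection e3 with e3 e4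
      injection e4 with e4 e5
      refine ⟨g₂, lam₂, ?_, ?_, ?_⟩
      · show ((r.loc i).2, ρ.sym i, g₂, lam₂, (r.loc (i+1)).2) ∈ A₂.trans
        have ha : (r.loc i).2 = s₂ := by rw [e1]
        have hb : (r.loc (i+1)).2 = s₂' := by rw [e5]
        rw [ha, hb, e2]; exact ht₂
      · rw [e3] at hsat
        exact (guard_sat_map _ _ _).1 hsat.2
      · funext x
        show r.val (i+1) (Sum.inr x) = _
        rw [hval, e4]
        simp only [resetVal, Set.mem_union, Set.mem_image]
        by_cases hx : x ∈ lam₂ <;> simp [hx]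
    · intro F₂ hF₂
      obtain ⟨s, hs, hinf⟩ := hr ((Set.univ : Set S₁) ×ˢ F₂) (Or.inr ⟨F₂, hF₂, rfl⟩)
      refine ⟨s.2, hs.2, fun N => ?_⟩
      obtain ⟨m, hm, he⟩ := hinf N
      exact ⟨m, hm, by show (r.loc m).2 = s.2; rw [he]⟩
  · rintro ⟨⟨r₁, hr₁⟩, ⟨r₂, hr₂⟩⟩
    refine ⟨⟨fun i => (r₁.loc i, r₂.loc i), fun i => Sum.elim (r₁.val i) (r₂.val i),
            ?_, ?_, ?_⟩, ?_⟩
    · show (r₁.loc 0, r₂.loc 0) = _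
      rw [r₁.init_loc, r₂.init_loc]; rfl
    · show Sum.elim (r₁.val 0) (r₂.val 0) = _
      rw [r₁.init_val, r₂.init_val]; funext x; cases x <;> rfl
    · intro i
      obtain ⟨g₁, lam₁, ht₁, hsat₁, hval₁⟩ := r₁.step i
      obtain ⟨g₂, lam₂, ht₂, hsat₂, hval₂⟩ := r₂.step i
      refine ⟨Guard.and (g₁.map Sum.inl) (g₂.map Sum.inr),
        (Sum.inl '' lam₁ ∪ Sum.inr '' lam₂ : Set (X₁ ⊕ X₂)), ?_, ?_, ?_⟩
      · exact ⟨r₁.loc i, r₁.loc (i+1), r₂.loc i, r₂.loc (i+1), ρ.sym i,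
          g₁, g₂, lam₁, lam₂, ht₁, ht₂, rfl⟩
      · exact ⟨(guard_sat_map _ _ _).2 hsat₁, (guard_sat_map _ _ _).2 hsat₂⟩
      · funext x
        cases x with
        | inl x =>
          show r₁.val (i+1) x = _
          have := congrFun hval₁ x
          simp only [resetVal, Set.mem_union, Set.mem_image] at this ⊢
          by_cases hx : x ∈ lam₁ <;> simp [hx] at this ⊢ <;> exact this
        | inr x =>
          show r₂.val (i+1) x = _
          have := congrFun hval₂ x
          simp only [resetVal, Set.mem_union, Set.mem_image] at this ⊢
          by_cases hx : x ∈ lam₂ <;> simp [hx] at this ⊢ <;> exact this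
    · rintro F (⟨F₁, hF₁, rfl⟩ | ⟨F₂, hF₂, rfl⟩)
      · obtain ⟨s₁, hs₁, hinf⟩ := hr₁ F₁ hF₁
        have hMinf : {m | r₁.loc m = s₁}.Infinite := infinite_of_freq hinf
        obtain ⟨s₂, hs₂⟩ := exists_infinite_fiber' (fun m => r₂.loc m) _ hMinf
        refine ⟨(s₁, s₂), ⟨hs₁, Set.mem_univ _⟩, fun N => ?_⟩
        obtain ⟨m, hm1, hm2⟩ := freq_of_infinite hs₂ N
        exact ⟨m, hm1, by show (r₁.loc m, r₂.loc m) = _; rw [hm2.1, hm2.2]⟩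
      · obtain ⟨s₂, hs₂, hinf⟩ := hr₂ F₂ hF₂
        have hMinf : {m | r₂.loc m = s₂}.Infinite := infinite_of_freq hinf
        obtain ⟨s₁, hs₁⟩ := exists_infinite_fiber' (fun m => r₁.loc m) _ hMinf
        refine ⟨(s₁, s₂), ⟨Set.mem_univ _, hs₂⟩, fun N => ?_⟩
        obtain ⟨m, hm1, hm2⟩ := freq_of_infinite hs₁ N
        exact ⟨m, hm1, by show (r₁.loc m, r₂.loc m) = _; rw [hm2.1, hm2.2]⟩
end

section
/- Every EECL formula can be translated into an equivalent EMITL_{0,∞} formula; in particular, for every NFA A over {1,…,n}, EMITL_{0,∞} formulae φ₁,…,φₙ, and bounds 0 < c < d, the EECL formula ⊳A_{(c,d)}(φ₁,…,φₙ) is equivalent over timed words to A_{<d}(φ₁,…,φₙ) ∧ ¬A_{≤c}(φ₁,…,φₙ). -/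
/-- A non-deterministic finite automaton with locations `Q` over alphabet `α`. -/
structure NFA' (Q α : Type*) where
  init : Q
  trans : Q → α → Q → Prop
  final : Q → Prop

/-- `A.RunOn q w q'`: the NFA has a run on the finite word `w` from `q` to `q'`. -/
def NFA'.RunOn {Q α : Type*} (A : NFA' Q α) : Q → List α → Q → Prop
  | q, [], q' => q = q'
  | q, a :: w, q' => ∃ q'', A.trans q a q'' ∧ A.RunOn q'' w q'

/-- Acceptance of a (nonempty) finite word: some run from the initial location
ends in a final location. -/
def NFA'.Accepts {Q α : Type*} (A : NFA' Q α) (w : List α) : Prop :=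
  w ≠ [] ∧ ∃ qf, A.final qf ∧ A.RunOn A.init w qf

/-- The word `a_i a_{i+1} ⋯ a_j` read off a labelling of positions. -/
def wordOf {α : Type*} (a : ℕ → α) (i j : ℕ) : List α :=
  (List.range (j + 1 - i)).map fun k => a (i + k)

/-- EMITL formulae: φ := ⊤ | p | φ₁ ∧ φ₂ | ¬φ | A_I(φ₁,…,φₙ), where A is an NFA over
the n-ary alphabet and I ⊆ ℝ a constraining interval. -/
inductive EMITL (AP : Type) : Type 1 where
  | top : EMITL AP
  | atom (p : AP) : EMITL AP
  | and (φ ψ : EMITL AP) : EMITL AP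
  | not (φ : EMITL AP) : EMITL AP
  | auto (n : ℕ) (Q : Type) (A : NFA' Q (Fin n)) (I : Set ℝ)
      (args : Fin n → EMITL AP) : EMITL AP

/-- The (semantic) automaton-modality clause: there is j ≥ i with τⱼ − τᵢ ∈ I and an
accepting run of A on a word a_i…a_j such that the ℓ-th argument condition `H ℓ (a ℓ)`
holds for all i ≤ ℓ ≤ j. -/
def AutoWit {Q : Type*} {n : ℕ} (A : NFA' Q (Fin n)) (tm : ℕ → ℝ)
    (H : ℕ → Fin n → Prop) (I : Set ℝ) (i : ℕ) : Prop :=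
  ∃ j, i ≤ j ∧ (tm j - tm i) ∈ I ∧
    ∃ a : ℕ → Fin n, A.Accepts (wordOf a i j) ∧ ∀ ℓ, i ≤ ℓ → ℓ ≤ j → H ℓ (a ℓ)

/-- Pointwise semantics of EMITL over timed words. -/
def EMITL.sat {AP : Type} (ρ : TimedWord (Set AP)) : ℕ → EMITL AP → Prop
  | _, .top => True
  | i, .atom p => p ∈ ρ.sym i
  | i, .and φ ψ => EMITL.sat ρ i φ ∧ EMITL.sat ρ i ψ
  | i, .not φ => ¬ EMITL.sat ρ i φ
  | i, .auto n _ A I args =>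
      AutoWit A ρ.tm (fun ℓ a => EMITL.sat ρ ℓ (args a)) I i


/-- A lower- or upper-bound constraining interval with natural endpoint. -/
def IsLowUp (I : Set ℝ) : Prop :=
  ∃ c : ℕ, I = Set.Iic (c : ℝ) ∨ I = Set.Iio (c : ℝ) ∨
            I = Set.Ici (c : ℝ) ∨ I = Set.Ioi (c : ℝ)

/-- The EMITL_{0,∞} fragment: all constraining intervals are lower or upper bounds. -/
def ZeroInf {AP : Type} : EMITL AP → Prop
  | .top => True
  | .atom _ => True
  | .and φ ψ => ZeroInf φ ∧ ZeroInf ψ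
  | .not φ => ZeroInf φ
  | .auto _ _ _ I args => IsLowUp I ∧ ∀ a, ZeroInf (args a)

/-- The event-clock automata modality ⊳A_I: the *minimal* j ≥ i admitting an accepting
run of A on a_i…a_j (with the argument formulae holding at the corresponding positions)
exists and satisfies τⱼ − τᵢ ∈ I. -/
def EAutoWit {Q : Type*} {n : ℕ} (A : NFA' Q (Fin n)) (tm : ℕ → ℝ)
    (H : ℕ → Fin n → Prop) (I : Set ℝ) (i : ℕ) : Prop :=
  ∃ j, i ≤ j ∧
    (∃ a : ℕ → Fin n, A.Accepts (wordOf a i j) ∧ ∀ ℓ, i ≤ ℓ → ℓ ≤ j → H ℓ (a ℓ)) ∧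
    (∀ j', i ≤ j' →
      (∃ a : ℕ → Fin n, A.Accepts (wordOf a i j') ∧ ∀ ℓ, i ≤ ℓ → ℓ ≤ j' → H ℓ (a ℓ)) →
      j ≤ j') ∧
    (tm j - tm i) ∈ I

/-- For EMITL_{0,∞} arguments φ₁,…,φₙ and bounds 0 < c < d, the EECL formula
⊳A_{(c,d)}(φ₁,…,φₙ) is equivalent over timed words to
A_{<d}(φ₁,…,φₙ) ∧ ¬A_{≤c}(φ₁,…,φₙ). -/
theorem eecl_to_emitl0inf {AP : Type} {n : ℕ} {Q : Type} (A : NFA' Q (Fin n))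
    (args : Fin n → EMITL AP) (c d : ℕ) (hc : 0 < c) (hcd : c < d)
    (hargs : ∀ a, ZeroInf (args a)) (ρ : TimedWord (Set AP)) (i : ℕ) :
    EAutoWit A ρ.tm (fun ℓ a => EMITL.sat ρ ℓ (args a)) (Set.Ioo (c : ℝ) (d : ℝ)) i ↔
      (AutoWit A ρ.tm (fun ℓ a => EMITL.sat ρ ℓ (args a)) (Set.Iio (d : ℝ)) i ∧
       ¬ AutoWit A ρ.tm (fun ℓ a => EMITL.sat ρ ℓ (args a)) (Set.Iic (c : ℝ)) i) := by
  classical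
  set H := fun ℓ a => EMITL.sat ρ ℓ (args a) with hH
  constructor
  · rintro ⟨j, hij, hwit, hmin, hlo, hhi⟩
    refine ⟨⟨j, hij, hhi, hwit⟩, ?_⟩
    rintro ⟨j', hij', hle, hwit'⟩
    have hjj' := hmin j' hij' hwit'
    have : ρ.tm j ≤ ρ.tm j' := ρ.mono hjj'
    simp only [Set.mem_Iic] at hle
    linarith
  · rintro ⟨⟨j, hij, hd, hwit⟩, hnot⟩
    have hex : ∃ k, i ≤ k ∧ ∃ a : ℕ → Fin n, A.Accepts (wordOf a i k) ∧
        ∀ ℓ, i ≤ ℓ → ℓ ≤ k → H ℓ (a ℓ) := ⟨j, hij, hwit⟩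
    set j₀ := Nat.find hex with hj₀
    obtain ⟨hij₀, hwit₀⟩ := Nat.find_spec hex
    have hmin : ∀ k, i ≤ k → (∃ a : ℕ → Fin n, A.Accepts (wordOf a i k) ∧
        ∀ ℓ, i ≤ ℓ → ℓ ≤ k → H ℓ (a ℓ)) → j₀ ≤ k :=
      fun k hk hw => Nat.find_min' hex ⟨hk, hw⟩
    refine ⟨j₀, hij₀, hwit₀, hmin, ?_, ?_⟩
    · by_contra hle
      push_neg at hle
      exact hnot ⟨j₀, hij₀, hle, hwit₀⟩
    · have hj₀j : j₀ ≤ j := hmin j hij hwit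
      have : ρ.tm j₀ ≤ ρ.tm j := ρ.mono hj₀j
      simp only [Set.mem_Iio] at hd
      linarith
end

section
/- The counting automata modality with threshold is expressible in EMITL: for every DFA A over {1,…,n}, interval I, threshold k ≥ 1, and EMITL formulae φ₁,…,φₙ such that at most one of φ₁,…,φₙ holds at any position of any timed word, the CEMITL formula A^{≥k}_I(φ₁,…,φₙ) is equivalent over timed words to a conjunction of k EMITL automata-modality formulae obtained by taking products of A with mod-k counter automata that count accepting positions modulo k. -/
def NFA'.Deterministic {Q α : Type*} (A : NFA' Q α) : Prop :=
  ∀ q a q' q'', A.trans q a q' → A.trans q a q'' → q' = q''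

/-- `Wit A tm H i j`: position j witnesses the automaton modality at i (an accepting
run of A on a_i…a_j with the argument conditions). -/
def Wit {Q : Type*} {n : ℕ} (A : NFA' Q (Fin n)) (H : ℕ → Fin n → Prop)
    (i j : ℕ) : Prop :=
  i ≤ j ∧ ∃ a : ℕ → Fin n, A.Accepts (wordOf a i j) ∧ ∀ ℓ, i ≤ ℓ → ℓ ≤ j → H ℓ (a ℓ)

/-- CEMITL semantics of the counting modality A^{≥k}_I: there are k positions
j₁ < ⋯ < j_k, all ≥ i with time difference in I, each admitting an accepting run. -/
def CSat {Q : Type*} {n : ℕ} (A : NFA' Q (Fin n)) (tm : ℕ → ℝ)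
    (H : ℕ → Fin n → Prop) (I : Set ℝ) (k : ℕ) (i : ℕ) : Prop :=
  ∃ js : Fin k → ℕ, StrictMono js ∧
    ∀ l : Fin k, i ≤ js l ∧ (tm (js l) - tm i) ∈ I ∧ Wit A H i (js l)

/-- The product of A with a mod-k counter (counting accepting positions modulo k),
with an extra final location (`none` in the second component) reachable exactly when
an accepting position is entered with counter value ℓ (mod k). -/
def counterProd {Q : Type*} {n : ℕ} (A : NFA' Q (Fin n)) (k l : ℕ) :
    NFA' (Q × Option ℕ) (Fin n) where
  init := (A.init, some 0)
  trans := fun s a s' =>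
    match s, s' with
    | (q, some c), (q', some c') => A.trans q a q' ∧
        ((¬ A.final q' ∧ c' = c) ∨ (A.final q' ∧ c' = (c + 1) % k))
    | (q, some c), (q', none) => A.trans q a q' ∧ A.final q' ∧ (c + 1) % k = l
    | (_, none), _ => False
  final := fun s => s.2 = none

section Helpers

open Classical in
/-- count of positions `s ∈ [1,t]` with `F s`. -/
noncomputable def cntF (F : ℕ → Prop) : ℕ → ℕ
  | 0 => 0
  | t+1 => cntF F t + if F (t+1) then 1 else 0

open Classical in
lemma cntF_succ (F : ℕ → Prop) (t : ℕ) :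
    cntF F (t+1) = cntF F t + if F (t+1) then 1 else 0 := rfl

lemma cntF_succ_of {F : ℕ → Prop} {t : ℕ} (h : F (t+1)) :
    cntF F (t+1) = cntF F t + 1 := by
  rw [cntF_succ, if_pos h]

lemma cntF_mono (F : ℕ → Prop) : Monotone (cntF F) := by
  apply monotone_nat_of_le_succ
  intro t
  rw [cntF_succ]
  split <;> omega

lemma cntF_succ_le (F : ℕ → Prop) (t : ℕ) : cntF F (t+1) ≤ cntF F t + 1 := by
  rw [cntF_succ]; split <;> omega

lemma cntF_lt {F : ℕ → Prop} {t t' : ℕ} (h : t < t') (hF : F t') :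
    cntF F t + 1 ≤ cntF F t' := by
  obtain ⟨u, rfl⟩ : ∃ u, t' = u + 1 := ⟨t' - 1, by omega⟩
  have := cntF_mono F (show t ≤ u by omega)
  rw [cntF_succ_of hF]; omega

lemma cntF_congr {F F' : ℕ → Prop} {t : ℕ} (h : ∀ u ≤ t, (F u ↔ F' u)) :
    cntF F t = cntF F' t := by
  induction t with
  | zero => rfl
  | succ t ih =>
    rw [cntF_succ, cntF_succ, ih (fun u hu => h u (by omega))]
    by_cases hf : F (t+1)
    · rw [if_pos hf, if_pos ((h (t+1) le_rfl).1 hf)]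
    · rw [if_neg hf, if_neg (fun hf' => hf ((h (t+1) le_rfl).2 hf'))]

lemma cntF_ivt (F : ℕ → Prop) {t₁ t₂ c : ℕ} (hF : F t₁) (h12 : t₁ ≤ t₂)
    (hc1 : cntF F t₁ ≤ c) (hc2 : c ≤ cntF F t₂) :
    ∃ s, t₁ ≤ s ∧ s ≤ t₂ ∧ F s ∧ cntF F s = c := by
  induction t₂ with
  | zero =>
    have ht : t₁ = 0 := by omega
    subst ht
    exact ⟨0, le_rfl, le_rfl, hF, by omega⟩
  | succ t ih =>
    by_cases hc : c ≤ cntF F t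
    · by_cases ht : t₁ ≤ t
      · obtain ⟨s, h1, h2, h3, h4⟩ := ih ht hc
        exact ⟨s, h1, by omega, h3, h4⟩
      · have : t₁ = t + 1 := by omega
        subst this
        have hmono := cntF_mono F (show t ≤ t + 1 by omega)
        exact ⟨t+1, le_rfl, le_rfl, hF, by omega⟩
    · push_neg at hc
      have hle := cntF_succ_le F t
      have hft : F (t+1) := by
        by_contra hf
        have : cntF F (t+1) = cntF F t := by rw [cntF_succ, if_neg hf]; omega
        omega
      refine ⟨t+1, h12, le_rfl, hft, ?_⟩
      rw [cntF_succ_of hft]; omega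

lemma exists_mod (a k l : ℕ) (hk : 0 < k) (hl : l < k) :
    ∃ c, a ≤ c ∧ c < a + k ∧ c % k = l := by
  obtain ⟨q, r, hrk, ha⟩ : ∃ q r, r < k ∧ a = k * q + r :=
    ⟨a / k, a % k, Nat.mod_lt a hk, (Nat.div_add_mod a k).symm⟩
  have hmod : ∀ q' : ℕ, (k * q' + l) % k = l := fun q' => by
    rw [Nat.mul_add_mod, Nat.mod_eq_of_lt hl]
  by_cases hrl : r ≤ l
  · refine ⟨k * q + l, ?_, ?_, hmod q⟩ <;> [linarith; linarith]
  · refine ⟨k * (q + 1) + l, ?_, ?_, hmod (q+1)⟩ <;>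
      [nlinarith; nlinarith]

lemma mod_succ_mod (c k : ℕ) : (c % k + 1) % k = (c + 1) % k := by
  conv_rhs => rw [Nat.add_mod]
  rw [Nat.add_mod (c % k) 1, Nat.mod_mod_of_dvd _ dvd_rfl]

end Helpers

section Runs

variable {Q α : Type*}

lemma runOn_range (A : NFA' Q α) (f : ℕ → α) (m : ℕ) (q q' : Q) :
    A.RunOn q ((List.range m).map f) q' ↔
      ∃ g : ℕ → Q, g 0 = q ∧ g m = q' ∧ ∀ t < m, A.trans (g t) (f t) (g (t+1)) := by
  induction m generalizing q f with
  | zero =>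
    simp only [List.range_zero, List.map_nil]
    constructor
    · intro h; exact ⟨fun _ => q, rfl, h, by omega⟩
    · rintro ⟨g, h0, hm, -⟩; exact h0 ▸ hm ▸ rfl
  | succ m ih =>
    rw [List.range_succ_eq_map, List.map_cons, List.map_map]
    show (∃ q'', A.trans q (f 0) q'' ∧ A.RunOn q'' ((List.range m).map (f ∘ Nat.succ)) q') ↔ _
    constructor
    · rintro ⟨q'', htr, hrun⟩
      obtain ⟨g, hg0, hgm, hgt⟩ := (ih (f ∘ Nat.succ) q'').1 hrun
      refine ⟨fun t => match t with | 0 => q | t+1 => g t, rfl, hgm, ?_⟩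
      intro t ht
      match t with
      | 0 => show A.trans q (f 0) (g 0); exact hg0 ▸ htr
      | t+1 => exact hgt t (by omega)
    · rintro ⟨g, hg0, hgm, hgt⟩
      refine ⟨g 1, hg0 ▸ hgt 0 (by omega), (ih (f ∘ Nat.succ) (g 1)).2 ?_⟩
      exact ⟨fun t => g (t+1), rfl, hgm, fun t ht => hgt (t+1) (by omega)⟩

lemma trace_unique {A : NFA' Q α} (hdet : A.Deterministic) {f : ℕ → α}
    {g g' : ℕ → Q} {m : ℕ} (h0 : g 0 = g' 0)
    (h1 : ∀ t < m, A.trans (g t) (f t) (g (t+1)))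
    (h2 : ∀ t < m, A.trans (g' t) (f t) (g' (t+1))) :
    ∀ t ≤ m, g t = g' t := by
  intro t
  induction t with
  | zero => intro _; exact h0
  | succ t iht =>
    intro ht
    have heq := iht (by omega)
    exact hdet _ _ _ _ (heq ▸ h1 t (by omega)) (h2 t (by omega))

lemma wordOf_congr {a a' : ℕ → α} {i j : ℕ} (h : ∀ ℓ, i ≤ ℓ → ℓ ≤ j → a ℓ = a' ℓ) :
    wordOf a i j = wordOf a' i j := by
  unfold wordOf
  apply List.map_congr_left
  intro t ht
  rw [List.mem_range] at ht
  exact h (i + t) (by omega) (by omega)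

lemma wordOf_length (a : ℕ → α) (i j : ℕ) : (wordOf a i j).length = j + 1 - i := by
  simp [wordOf]

lemma wordOf_ne_nil {a : ℕ → α} {i j : ℕ} (h : i ≤ j) : wordOf a i j ≠ [] := by
  intro hnil
  have := wordOf_length a i j
  rw [hnil] at this
  simp at this
  omega

end Runs

section Prod

variable {Q : Type*} {n : ℕ} (A : NFA' Q (Fin n)) (k l : ℕ)

lemma cp_trans_ss (q q' : Q) (c c' : ℕ) (a : Fin n) :
    (counterProd A k l).trans (q, some c) a (q', some c') ↔
      A.trans q a q' ∧ ((¬ A.final q' ∧ c' = c) ∨ (A.final q' ∧ c' = (c + 1) % k)) :=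
  Iff.rfl

lemma cp_trans_sn (q q' : Q) (c : ℕ) (a : Fin n) :
    (counterProd A k l).trans (q, some c) a (q', none) ↔
      A.trans q a q' ∧ A.final q' ∧ (c + 1) % k = l :=
  Iff.rfl

lemma cp_trans_n (q : Q) (s' : Q × Option ℕ) (a : Fin n) :
    ¬ (counterProd A k l).trans (q, none) a s' := by
  intro h
  exact h

end Prod

section ProdRuns

variable {Q : Type*} {n : ℕ}

/-- Build a product run from an A-run with the right accepting-position count. -/
lemma prod_run_of_run {A : NFA' Q (Fin n)} {k l : ℕ} {f : ℕ → Fin n} {g : ℕ → Q} {m : ℕ}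
    (hm : 1 ≤ m) (htr : ∀ t < m, A.trans (g t) (f t) (g (t+1)))
    (hfin : A.final (g m))
    (hcnt : cntF (fun t => A.final (g t)) m % k = l) :
    ∃ G : ℕ → Q × Option ℕ, G 0 = (g 0, some 0) ∧ G m = (g m, none) ∧
      ∀ t < m, (counterProd A k l).trans (G t) (f t) (G (t+1)) := by
  classical
  set F := fun t => A.final (g t) with hF
  refine ⟨fun t => if t = m then (g m, none) else (g t, some (cntF F t % k)), ?_, ?_, ?_⟩
  · show (if (0:ℕ) = m then ((g m, none) : Q × Option ℕ) else (g 0, some (cntF F 0 % k))) = (g 0, some 0)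
    rw [if_neg (by omega : ¬ (0:ℕ) = m)]
    simp [cntF]
  · show (if m = m then ((g m, none) : Q × Option ℕ) else (g m, some (cntF F m % k))) = (g m, none)
    rw [if_pos rfl]
  · intro t ht
    show (counterProd A k l).trans
        (if t = m then (g m, none) else (g t, some (cntF F t % k))) (f t)
        (if t + 1 = m then (g m, none) else (g (t+1), some (cntF F (t+1) % k)))
    rw [if_neg (by omega : ¬ t = m)]
    by_cases htm : t + 1 = m
    · rw [if_pos htm]
      have h1 : A.trans (g t) (f t) (g m) := htm ▸ htr t ht
      rw [cp_trans_sn]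
      refine ⟨h1, hfin, ?_⟩
      rw [mod_succ_mod]
      have hFm : F (t+1) := show A.final (g (t+1)) from htm ▸ hfin
      have : cntF F m = cntF F t + 1 := by rw [← htm]; exact cntF_succ_of hFm
      rw [← this]; exact hcnt
    · rw [if_neg htm, cp_trans_ss]
      refine ⟨htr t ht, ?_⟩
      by_cases hf : F (t+1)
      · exact Or.inr ⟨hf, by rw [cntF_succ_of hf, mod_succ_mod]⟩
      · refine Or.inl ⟨hf, ?_⟩
        have : cntF F (t+1) = cntF F t := by rw [cntF_succ, if_neg hf]; omega
        rw [this]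

/-- Decompose a product run into an A-run plus count information. -/
lemma run_of_prod_run {A : NFA' Q (Fin n)} {k l : ℕ} {f : ℕ → Fin n}
    {G : ℕ → Q × Option ℕ} {m : ℕ}
    (hm : 1 ≤ m) (hG0 : G 0 = (A.init, some 0))
    (htr : ∀ t < m, (counterProd A k l).trans (G t) (f t) (G (t+1)))
    (hfin : (G m).2 = none) :
    (G 0).1 = A.init ∧
    (∀ t < m, A.trans ((G t).1) (f t) ((G (t+1)).1)) ∧
    A.final ((G m).1) ∧
    cntF (fun t => A.final ((G t).1)) m % k = l := by
  classical
  set g := fun t => (G t).1 with hg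
  set F := fun t => A.final (g t) with hF
  -- counters along the run
  have key : ∀ t < m, (G t).2 = some (cntF F t % k) := by
    intro t
    induction t with
    | zero =>
      intro _
      rw [hG0]
      simp [cntF]
    | succ t ih =>
      intro ht
      have h2 := ih (by omega)
      have htt := htr t (by omega)
      rcases hsnd : (G (t+1)).2 with _ | c'
      · exfalso
        have htt' := htr (t+1) ht
        have hGt1 : G (t+1) = ((G (t+1)).1, none) := by rw [← hsnd]
        rw [hGt1] at htt'
        exact cp_trans_n A k l _ _ _ htt'
      · have hGt : G t = (g t, some (cntF F t % k)) := by rw [hg, ← h2]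
        have hGt1 : G (t+1) = (g (t+1), some c') := by rw [hg, ← hsnd]
        rw [hGt, hGt1, cp_trans_ss] at htt
        rcases htt.2 with ⟨hnf, hc⟩ | ⟨hf, hc⟩
        · have hstep : cntF F (t+1) = cntF F t := by
            rw [cntF_succ, if_neg hnf]; omega
          rw [hc, hstep]
        · have hstep : cntF F (t+1) = cntF F t + 1 := cntF_succ_of hf
          rw [hc, hstep, mod_succ_mod]
  -- transitions project
  have htrans : ∀ t < m, A.trans (g t) (f t) (g (t+1)) := by
    intro t ht
    have htt := htr t ht
    have h2 := key t ht
    have hGt : G t = (g t, some (cntF F t % k)) := by rw [hg, ← h2]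
    rw [hGt] at htt
    rcases hsnd : (G (t+1)).2 with _ | c'
    · have hGt1 : G (t+1) = (g (t+1), none) := by rw [hg, ← hsnd]
      rw [hGt1] at htt
      exact htt.1
    · have hGt1 : G (t+1) = (g (t+1), some c') := by rw [hg, ← hsnd]
      rw [hGt1] at htt
      exact htt.1
  -- final step
  obtain ⟨u, rfl⟩ : ∃ u, m = u + 1 := ⟨m - 1, by omega⟩
  have htt := htr u (by omega)
  have h2 := key u (by omega)
  have hGt : G u = (g u, some (cntF F u % k)) := by rw [hg, ← h2]
  have hGt1 : G (u+1) = (g (u+1), none) := by rw [hg, ← hfin]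
  rw [hGt, hGt1, cp_trans_sn] at htt
  obtain ⟨-, hf, hc⟩ := htt
  refine ⟨by rw [hG0], htrans, hf, ?_⟩
  show cntF F (u+1) % k = l
  rw [cntF_succ_of (show F (u+1) from hf), ← mod_succ_mod]
  exact hc

end ProdRuns

section WordRuns

variable {Q α : Type*}

lemma runOn_wordOf (A : NFA' Q α) (a : ℕ → α) (i j : ℕ) (q q' : Q) :
    A.RunOn q (wordOf a i j) q' ↔
      ∃ g : ℕ → Q, g 0 = q ∧ g (j+1-i) = q' ∧
        ∀ t < j+1-i, A.trans (g t) (a (i+t)) (g (t+1)) :=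
  runOn_range A (fun t => a (i+t)) (j+1-i) q q'

end WordRuns

set_option maxHeartbeats 1000000 in
/-- The counting modality with threshold is expressible in EMITL: for a deterministic A
and mutually exclusive argument formulae, (ρ,i) ⊨ A^{≥k}_I(φ₁,…,φₙ) iff all k product
automata modalities A^{(ℓ)}_I (ℓ = 0,…,k−1) hold at (ρ,i). -/
theorem counting_expressible {AP : Type} {n : ℕ} {Q : Type} (A : NFA' Q (Fin n))
    (hdet : A.Deterministic) (args : Fin n → EMITL AP)
    (hexcl : ∀ (ρ : TimedWord (Set AP)) (ℓ : ℕ) (a b : Fin n),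
      EMITL.sat ρ ℓ (args a) → EMITL.sat ρ ℓ (args b) → a = b)
    (I : Set ℝ) (hI : I.OrdConnected) (k : ℕ) (hk : 1 ≤ k)
    (ρ : TimedWord (Set AP)) (i : ℕ) :
    CSat A ρ.tm (fun ℓ a => EMITL.sat ρ ℓ (args a)) I k i ↔
      ∀ l, l < k →
        AutoWit (counterProd A k l) ρ.tm (fun ℓ a => EMITL.sat ρ ℓ (args a)) I i := by
  have hk0 : 0 < k := hk
  constructor
  · rintro ⟨js, hjs, hall⟩ l hl
    set z : Fin k := ⟨0, hk0⟩ with hz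
    set top : Fin k := ⟨k-1, by omega⟩ with htop'
    obtain ⟨hi0, hin0, -⟩ := hall z
    obtain ⟨hit, hint, hwt⟩ := hall top
    obtain ⟨-, a, ⟨hne, qf, hqf, hrun⟩, hHa⟩ := hwt
    rw [runOn_wordOf] at hrun
    obtain ⟨g, hg0, hgM, hgtr⟩ := hrun
    set F : ℕ → Prop := fun t => A.final (g t) with hF
    set s : Fin k → ℕ := fun m => js m + 1 - i with hs
    have hsmem : ∀ m : Fin k, i ≤ js m := fun m => (hall m).1
    have hjsmono : ∀ m m' : Fin k, m ≤ m' → js m ≤ js m' := fun _ _ h => hjs.monotone h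
    have hletop : ∀ m : Fin k, m ≤ top := fun m => by
      have := m.isLt; exact Fin.mk_le_mk.2 (by omega) |>.trans_eq rfl
    have hsM : ∀ m : Fin k, s m ≤ js top + 1 - i := fun m => by
      have := hjsmono m top (hletop m); simp only [hs]; omega
    have hfinal : ∀ m : Fin k, F (s m) := by
      intro m
      obtain ⟨him, a', ⟨hne', qf', hqf', hrun''⟩, hH'⟩ := (hall m).2.2
      have hword : wordOf a' i (js m) = wordOf a i (js m) :=
        wordOf_congr (fun ℓ h1 h2 => hexcl ρ ℓ _ _ (hH' ℓ h1 h2)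
          (hHa ℓ h1 (le_trans h2 (hjsmono m top (hletop m)))))
      rw [hword, runOn_wordOf] at hrun''
      obtain ⟨g', hg'0, hg'M, hg'tr⟩ := hrun''
      have huniq := trace_unique hdet (f := fun t => a (i+t)) (g := g') (g' := g)
        (m := js m + 1 - i) (hg'0.trans hg0.symm) hg'tr
        (fun t ht => hgtr t (by have := hsM m; simp only [hs] at this; omega))
      show A.final (g (s m))
      have : g' (js m + 1 - i) = g (js m + 1 - i) := huniq _ le_rfl
      rw [hs]
      rw [← this]
      exact hg'M ▸ hqf'
    have hsmono : StrictMono s := fun m m' h => by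
      have h1 := hjs h
      have h2 := hsmem m
      simp only [hs]; omega
    have hs0 : 1 ≤ s z := by have := hsmem z; simp only [hs]; omega
    have hchain : ∀ d : ℕ, ∀ hd : d < k, cntF F (s z) + d ≤ cntF F (s ⟨d, hd⟩) := by
      intro d
      induction d with
      | zero =>
        intro hd
        have : (⟨0, hd⟩ : Fin k) = z := rfl
        rw [this]; omega
      | succ d ihd =>
        intro hd
        have h1 := ihd (by omega)
        have h2 : s ⟨d, by omega⟩ < s ⟨d+1, hd⟩ := hsmono (Fin.mk_lt_mk.2 (by omega))
        have h3 := cntF_lt h2 (hfinal ⟨d+1, hd⟩)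
        omega
    have htopchain := hchain (k-1) (by omega)
    have htopeq : (⟨k-1, by omega⟩ : Fin k) = top := rfl
    rw [htopeq] at htopchain
    obtain ⟨c, hc1, hc2, hcmod⟩ := exists_mod (cntF F (s z)) k l hk0 hl
    have hc3 : c ≤ cntF F (s top) := by omega
    have hzt : s z ≤ s top := hsmono.monotone (hletop z)
    obtain ⟨u, hu1, hu2, huF, huc⟩ := cntF_ivt F (hfinal z) hzt hc1 hc3
    have hui : 1 ≤ u := le_trans hs0 hu1
    obtain ⟨j, hj⟩ : ∃ j, j = i + u - 1 := ⟨_, rfl⟩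
    have hjz : js z ≤ j := by have := hsmem z; simp only [hs] at hu1; omega
    have hjt : j ≤ js top := by have := hsmem top; simp only [hs] at hu2; omega
    have hij : i ≤ j := le_trans (hsmem z) hjz
    have hu' : j + 1 - i = u := by omega
    refine ⟨j, hij, ?_, a, ⟨wordOf_ne_nil hij, (g u, none), rfl, ?_⟩, ?_⟩
    · exact hI.out hin0 hint
        ⟨sub_le_sub_right (ρ.mono hjz) _, sub_le_sub_right (ρ.mono hjt) _⟩
    · rw [runOn_wordOf, hu']
      obtain ⟨G, hG0, hGm, hGtr⟩ := prod_run_of_run (A := A) (k := k) (l := l)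
        (f := fun t => a (i+t)) (g := g) (m := u) hui
        (fun t ht => hgtr t (by have := hsM top; simp only [hs] at this ⊢; omega))
        huF (by rw [huc]; exact hcmod)
      exact ⟨G, by rw [hG0, hg0]; rfl, hGm, hGtr⟩
    · exact fun ℓ h1 h2 => hHa ℓ h1 (le_trans h2 hjt)
  · intro h
    haveI : Nonempty (Fin k) := ⟨⟨0, hk0⟩⟩
    have h' : ∀ l : Fin k, ∃ j, i ≤ j ∧ (ρ.tm j - ρ.tm i) ∈ I ∧
        ∃ a, (counterProd A k l.1).Accepts (wordOf a i j) ∧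
          ∀ ℓ, i ≤ ℓ → ℓ ≤ j → EMITL.sat ρ ℓ (args (a ℓ)) := fun l => h l.1 l.isLt
    choose jv h1 h2 av h3 h4 using h'
    obtain ⟨L, hL⟩ := Finite.exists_max jv
    obtain ⟨hneL, qfL, hqfL, hrunL⟩ := h3 L
    rw [runOn_wordOf] at hrunL
    obtain ⟨Gmax, hGm0, hGmm, hGmtr⟩ := hrunL
    have hmL : 1 ≤ jv L + 1 - i := by have := h1 L; omega
    have hdecL := run_of_prod_run hmL hGm0 hGmtr (by rw [hGmm]; exact hqfL)
    have main : ∀ l : Fin k,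
        cntF (fun t => A.final ((Gmax t).1)) (jv l + 1 - i) % k = l.1 ∧
        Wit A (fun ℓ a => EMITL.sat ρ ℓ (args a)) i (jv l) := by
      intro l
      obtain ⟨hnel, qfl, hqfl, hrunl⟩ := h3 l
      rw [runOn_wordOf] at hrunl
      obtain ⟨G, hG0, hGm, hGtr⟩ := hrunl
      have hml : 1 ≤ jv l + 1 - i := by have := h1 l; omega
      have hagree : ∀ t < jv l + 1 - i, av l (i+t) = av L (i+t) := by
        intro t ht
        have hil := h1 l
        have hiL := h1 L
        have hLl := hL l
        exact hexcl ρ _ _ _ (h4 l _ (by omega) (by omega))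
          (h4 L _ (by omega) (by omega))
      have hGtr' : ∀ t < jv l + 1 - i,
          (counterProd A k l.1).trans (G t) (av L (i+t)) (G (t+1)) :=
        fun t ht => hagree t ht ▸ hGtr t ht
      obtain ⟨hg0, hgtr, hgfin, hgcnt⟩ := run_of_prod_run hml hG0 hGtr' (by rw [hGm]; exact hqfl)
      have hle : jv l + 1 - i ≤ jv L + 1 - i := by have := hL l; have := h1 l; omega
      have huniq := trace_unique hdet (f := fun t => av L (i+t))
        (g := fun t => (G t).1) (g' := fun t => (Gmax t).1) (m := jv l + 1 - i)
        (hg0.trans hdecL.1.symm) hgtr (fun t ht => hdecL.2.1 t (by omega))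
      constructor
      · have hcong : cntF (fun t => A.final ((G t).1)) (jv l + 1 - i)
            = cntF (fun t => A.final ((Gmax t).1)) (jv l + 1 - i) :=
          cntF_congr (fun u hu => iff_of_eq (congrArg _ (huniq u hu)))
        rw [← hcong]; exact hgcnt
      · refine ⟨h1 l, av l, ⟨wordOf_ne_nil (h1 l), (G (jv l + 1 - i)).1, hgfin, ?_⟩, h4 l⟩
        rw [runOn_wordOf]
        exact ⟨fun t => (G t).1, hg0, rfl, fun t ht => (hagree t ht).symm ▸ hgtr t ht⟩
    have hinj : Function.Injective jv := by
      intro l l' he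
      have c1 := (main l).1
      have c2 := (main l').1
      rw [he] at c1
      exact Fin.ext (c1.symm.trans c2)
    set sFin : Finset ℕ := Finset.image jv Finset.univ with hsFin
    have hcard : sFin.card = k := by
      rw [hsFin, Finset.card_image_of_injective _ hinj, Finset.card_univ, Fintype.card_fin]
    refine ⟨fun m => (sFin.orderIsoOfFin hcard m : ℕ), ?_, ?_⟩
    · intro x y hxy
      exact Subtype.coe_lt_coe.2 ((sFin.orderIsoOfFin hcard).strictMono hxy)
    · intro m
      have hmem : ((sFin.orderIsoOfFin hcard m : ℕ)) ∈ sFin := (sFin.orderIsoOfFin hcard m).2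
      obtain ⟨l, -, hlv⟩ := Finset.mem_image.1 hmem
      beta_reduce
      rw [← hlv]
      exact ⟨h1 l, h2 l, (main l).2⟩
end

section
/- The one-clock TA in Figure 3 accepts exactly the complement property ⟦◇(p ∧ G_{≤1}¬q)⟧ = ⟦¬G(p ⇒ ◇_{≤1}q)⟧: a timed word ρ over 2^{{p,q}} is accepted iff there exists a position i with p ∈ σᵢ, q ∉ σᵢ, and q ∉ σⱼ for all j > i with τⱼ − τᵢ ≤ 1. -/
open scoped Classical

/-- Letters over the propositions {p, q}: a letter is a pair of Booleans
(whether p holds, whether q holds). -/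
abbrev PQ := Bool × Bool

/-- The one-clock TA of Figure 3: initial location 0 with a ⊤ self-loop; a transition
0 → 1 on letters satisfying p ∧ ¬q, resetting the clock; a self-loop at 1 on ¬q-letters
guarded x ≤ 1; a transition 1 → 2 guarded x > 1; and a ⊤ self-loop at the Büchi-final
location 2. -/
def fig3TA : TA (Fin 3) Unit PQ where
  init := 0
  trans :=
    {t | ∃ σ : PQ, t = ((0 : Fin 3), σ, Guard.top, (∅ : Set Unit), (0 : Fin 3))} ∪
    {t | ∃ σ : PQ, σ.1 = true ∧ σ.2 = false ∧
          t = ((0 : Fin 3), σ, Guard.top, (Set.univ : Set Unit), (1 : Fin 3))} ∪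
    {t | ∃ σ : PQ, σ.2 = false ∧
          t = ((1 : Fin 3), σ, Guard.le () 1, (∅ : Set Unit), (1 : Fin 3))} ∪
    {t | ∃ σ : PQ, t = ((1 : Fin 3), σ, Guard.gt () 1, (∅ : Set Unit), (2 : Fin 3))} ∪
    {t | ∃ σ : PQ, t = ((2 : Fin 3), σ, Guard.top, (∅ : Set Unit), (2 : Fin 3))}
  acc := {{(2 : Fin 3)}}

lemma fig3_step {ρ : TimedWord PQ} (r : TARun fig3TA ρ) (i : ℕ) :
    (r.loc i = 0 ∧ r.loc (i+1) = 0 ∧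
       r.val (i+1) = fun x => r.val i x + (ρ.tm i - prevT ρ i)) ∨
    (r.loc i = 0 ∧ r.loc (i+1) = 1 ∧ (ρ.sym i).1 = true ∧ (ρ.sym i).2 = false ∧
       r.val (i+1) = fun _ => 0) ∨
    (r.loc i = 1 ∧ r.loc (i+1) = 1 ∧ (ρ.sym i).2 = false ∧
       r.val i () + (ρ.tm i - prevT ρ i) ≤ 1 ∧
       r.val (i+1) = fun x => r.val i x + (ρ.tm i - prevT ρ i)) ∨
    (r.loc i = 1 ∧ r.loc (i+1) = 2 ∧ 1 < r.val i () + (ρ.tm i - prevT ρ i) ∧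
       r.val (i+1) = fun x => r.val i x + (ρ.tm i - prevT ρ i)) ∨
    (r.loc i = 2 ∧ r.loc (i+1) = 2 ∧
       r.val (i+1) = fun x => r.val i x + (ρ.tm i - prevT ρ i)) := by
  obtain ⟨g, lam, hmem, hsat, hval⟩ := r.step i
  have hempty : ∀ v : Unit → ℝ, resetVal v (∅ : Set Unit) = v := by
    intro v; funext x; simp [resetVal]
  simp only [fig3TA, Set.mem_union, Set.mem_setOf_eq] at hmem
  rcases hmem with ((((⟨σ, ht⟩ | ⟨σ, hp, hq, ht⟩) | ⟨σ, hq, ht⟩) | ⟨σ, ht⟩) | ⟨σ, ht⟩) <;>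
    simp only [Prod.ext_iff] at ht
  · obtain ⟨h1, h2, h3, h4, h5⟩ := ht
    left
    refine ⟨h1, h5, ?_⟩
    rw [hval, h4, hempty]
  · obtain ⟨h1, h2, h3, h4, h5⟩ := ht
    right; left
    refine ⟨h1, h5, by rw [h2.1]; exact hp, by rw [h2.2]; exact hq, ?_⟩
    rw [hval, h4]
    funext x; simp [resetVal]
  · obtain ⟨h1, h2, h3, h4, h5⟩ := ht
    right; right; left
    refine ⟨h1, h5, by rw [h2.2]; exact hq, ?_, ?_⟩
    · rw [h3] at hsat; simpa [Guard.sat] using hsat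
    · rw [hval, h4, hempty]
  · obtain ⟨h1, h2, h3, h4, h5⟩ := ht
    right; right; right; left
    refine ⟨h1, h5, ?_, ?_⟩
    · rw [h3] at hsat; simpa [Guard.sat] using hsat
    · rw [hval, h4, hempty]
  · obtain ⟨h1, h2, h3, h4, h5⟩ := ht
    right; right; right; right
    refine ⟨h1, h5, ?_⟩
    rw [hval, h4, hempty]

lemma fig3_reach {ρ : TimedWord PQ} (r : TARun fig3TA ρ) :
    ∀ m, (r.loc m = 1 ∨ r.loc m = 2) →
      ∃ k, k < m ∧ r.loc k = 0 ∧ r.loc (k+1) = 1 ∧ (ρ.sym k).1 = true ∧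
        (ρ.sym k).2 = false ∧ r.val (k+1) = fun _ => 0 := by
  intro m
  induction m with
  | zero =>
    intro h
    have h0 : r.loc 0 = 0 := r.init_loc
    rcases h with h | h <;> rw [h0] at h <;> exact absurd h (by decide)
  | succ m ih =>
    intro h
    rcases fig3_step r m with ⟨_, h2, _⟩ | ⟨_, h2, hp, hq, hv⟩ |
      ⟨h1, _, _⟩ | ⟨h1, _, _⟩ | ⟨h1, _, _⟩
    · rcases h with h | h <;> rw [h2] at h <;> exact absurd h (by decide)
    · exact ⟨m, Nat.lt_succ_self m, by assumption, h2, hp, hq, hv⟩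
    all_goals
      obtain ⟨k, hk, hrest⟩ := ih (by first | exact Or.inl h1 | exact Or.inr h1)
      exact ⟨k, Nat.lt_succ_of_lt hk, hrest⟩

lemma fig3_inv {ρ : TimedWord PQ} (r : TARun fig3TA ρ) (i : ℕ)
    (h1 : r.loc (i+1) = 1) (hv : r.val (i+1) = fun _ => 0) :
    ∀ j, i < j →
      (r.loc j = 1 ∧ r.val j () = prevT ρ j - ρ.tm i) ∨
      (r.loc j = 2 ∧ ∃ k, i ≤ k ∧ k < j ∧ 1 < ρ.tm k - ρ.tm i) := by
  intro j hj
  induction j, hj using Nat.le_induction with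
  | base =>
    left
    refine ⟨h1, ?_⟩
    rw [hv]
    show (0 : ℝ) = prevT ρ (i+1) - ρ.tm i
    simp [prevT]
  | succ j hij ih =>
    rcases ih with ⟨hl, hval⟩ | ⟨hl, k, hk1, hk2, hk3⟩
    · rcases fig3_step r j with ⟨h1', _⟩ | ⟨h1', _⟩ |
        ⟨_, h2, _, _, hv'⟩ | ⟨_, h2, hgt, _⟩ | ⟨h1', _⟩
      · rw [hl] at h1'; exact absurd h1' (by decide)
      · rw [hl] at h1'; exact absurd h1' (by decide)
      · left
        refine ⟨h2, ?_⟩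
        rw [hv']
        show r.val j () + (ρ.tm j - prevT ρ j) = prevT ρ (j+1) - ρ.tm i
        rw [hval]
        show prevT ρ j - ρ.tm i + (ρ.tm j - prevT ρ j) = ρ.tm j - ρ.tm i
        ring
      · right
        refine ⟨h2, j, Nat.le_of_lt hij, Nat.lt_succ_self j, ?_⟩
        rw [hval] at hgt
        calc (1:ℝ) < prevT ρ j - ρ.tm i + (ρ.tm j - prevT ρ j) := hgt
          _ = ρ.tm j - ρ.tm i := by ring
      · rw [hl] at h1'; exact absurd h1' (by decide)
    · rcases fig3_step r j with ⟨h1', _⟩ | ⟨h1', _⟩ |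
        ⟨h1', _⟩ | ⟨h1', _⟩ | ⟨_, h2, _⟩
      · rw [hl] at h1'; exact absurd h1' (by decide)
      · rw [hl] at h1'; exact absurd h1' (by decide)
      · rw [hl] at h1'; exact absurd h1' (by decide)
      · rw [hl] at h1'; exact absurd h1' (by decide)
      · exact Or.inr ⟨h2, k, hk1, Nat.lt_succ_of_lt hk2, hk3⟩

/-- The TA of Figure 3 accepts exactly ⟦◇(p ∧ G_{≤1} ¬q)⟧ = ⟦¬G(p ⇒ ◇_{≤1} q)⟧:
a timed word over 2^{p,q} is accepted iff there is a position i with p ∈ σᵢ, q ∉ σᵢ,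
and q ∉ σⱼ for all j > i with τⱼ − τᵢ ≤ 1. -/
theorem fig3TA_lang :
    TALang fig3TA =
      {ρ : TimedWord PQ | ∃ i : ℕ, (ρ.sym i).1 = true ∧ (ρ.sym i).2 = false ∧
        ∀ j, i < j → ρ.tm j - ρ.tm i ≤ 1 → (ρ.sym j).2 = false} := by
  ext ρ
  simp only [Set.mem_setOf_eq, TALang]
  constructor
  · rintro ⟨r, hacc⟩
    obtain ⟨s, hs, hinf⟩ := hacc {(2 : Fin 3)} rfl
    rw [Set.mem_singleton_iff] at hs
    subst hs
    obtain ⟨m, -, hm⟩ := hinf 0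
    obtain ⟨i, -, -, h1, hp, hq, hv⟩ := fig3_reach r m (Or.inr hm)
    refine ⟨i, hp, hq, ?_⟩
    intro j hij hle
    rcases fig3_inv r i h1 hv j hij with ⟨hl, hval⟩ | ⟨-, k, hk1, hk2, hk3⟩
    · rcases fig3_step r j with ⟨h1', _⟩ | ⟨h1', _⟩ |
        ⟨_, _, hq', _⟩ | ⟨_, _, hgt, _⟩ | ⟨h1', _⟩
      · rw [hl] at h1'; exact absurd h1' (by decide)
      · rw [hl] at h1'; exact absurd h1' (by decide)
      · exact hq'
      · exfalso
        rw [hval] at hgt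
        have : prevT ρ j - ρ.tm i + (ρ.tm j - prevT ρ j) = ρ.tm j - ρ.tm i := by ring
        rw [this] at hgt
        linarith
      · rw [hl] at h1'; exact absurd h1' (by decide)
    · exfalso
      have : ρ.tm k ≤ ρ.tm j := ρ.mono (Nat.le_of_lt hk2)
      linarith
  · rintro ⟨i, hp, hq, hG⟩
    have hex : ∃ j, i < j ∧ 1 < ρ.tm j - ρ.tm i := by
      obtain ⟨j, hj⟩ := ρ.nonZeno (ρ.tm i + 2)
      refine ⟨j, ?_, by linarith⟩
      by_contra h
      push_neg at h
      have := ρ.mono h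
      linarith
    classical
    set K := Nat.find hex with hK
    obtain ⟨hiK, hKgt⟩ : i < K ∧ 1 < ρ.tm K - ρ.tm i := Nat.find_spec hex
    have hKmin : ∀ j, i < j → j < K → ρ.tm j - ρ.tm i ≤ 1 := by
      intro j h1 h2
      have := Nat.find_min hex h2
      push_neg at this
      exact this h1
    refine ⟨⟨fun j => if j ≤ i then 0 else if j ≤ K then 1 else 2,
      fun j _ => if j ≤ i then prevT ρ j else prevT ρ j - ρ.tm i,
      by simp [fig3TA], by funext x; simp [prevT], ?_⟩, ?_⟩
    · intro j
      rcases lt_trichotomy j i with hj | hj | hj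
      · -- self-loop at 0
        refine ⟨Guard.top, ∅, ?_, trivial, ?_⟩
        · exact Or.inl (Or.inl (Or.inl (Or.inl ⟨ρ.sym j, by
            simp [hj.le, Nat.succ_le_of_lt hj]⟩)))
        · funext x
          simp only [resetVal, Set.mem_empty_iff_false, if_false]
          rw [if_pos hj.le, if_pos (Nat.succ_le_of_lt hj)]
          show prevT ρ (j+1) = prevT ρ j + (ρ.tm j - prevT ρ j)
          simp [prevT]
      · -- transition 0 → 1 at step i
        subst hj
        refine ⟨Guard.top, Set.univ, ?_, trivial, ?_⟩
        · exact Or.inl (Or.inl (Or.inl (Or.inr ⟨ρ.sym j, hp, hq, by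
            simp [le_refl, Nat.not_succ_le_self, Nat.succ_le_of_lt hiK]⟩)))
        · funext x
          simp only [resetVal, Set.mem_univ, if_true]
          rw [if_neg (Nat.not_succ_le_self j)]
          show prevT ρ (j+1) - ρ.tm j = 0
          simp [prevT]
      · rcases lt_trichotomy j K with hjK | hjK | hjK
        · -- self-loop at 1
          have e1 : ¬ (j ≤ i) := by omega
          have e2 : ¬ (j + 1 ≤ i) := by omega
          have e3 : j ≤ K := hjK.le
          have e4 : j + 1 ≤ K := hjK
          refine ⟨Guard.le () 1, ∅, ?_, ?_, ?_⟩
          · exact Or.inl (Or.inl (Or.inr ⟨ρ.sym j, hG j hj (hKmin j hj hjK), by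
              simp [e1, e2, e3, e4]⟩))
          · show (if j ≤ i then prevT ρ j else prevT ρ j - ρ.tm i) +
              (ρ.tm j - prevT ρ j) ≤ ((1:ℕ) : ℝ)
            rw [if_neg e1]
            push_cast
            have := hKmin j hj hjK
            linarith
          · funext x
            simp only [resetVal, Set.mem_empty_iff_false, if_false]
            rw [if_neg e2, if_neg e1]
            show ρ.tm j - ρ.tm i = prevT ρ j - ρ.tm i + (ρ.tm j - prevT ρ j)
            ring
        · -- transition 1 → 2 at step K
          subst hjK
          have e1 : ¬ (K ≤ i) := by omega
          have e2 : ¬ (K + 1 ≤ i) := by omega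
          have e3 : ¬ (K + 1 ≤ K) := by omega
          refine ⟨Guard.gt () 1, ∅, ?_, ?_, ?_⟩
          · exact Or.inl (Or.inr ⟨ρ.sym K, by simp [e1, e2, e3]⟩)
          · show ((1:ℕ) : ℝ) < (if K ≤ i then prevT ρ K else prevT ρ K - ρ.tm i) +
              (ρ.tm K - prevT ρ K)
            rw [if_neg e1]
            push_cast
            linarith
          · funext x
            simp only [resetVal, Set.mem_empty_iff_false, if_false]
            rw [if_neg e2, if_neg e1]
            show ρ.tm K - ρ.tm i = prevT ρ K - ρ.tm i + (ρ.tm K - prevT ρ K)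
            ring
        · -- self-loop at 2
          have e1 : ¬ (j ≤ i) := by omega
          have e2 : ¬ (j + 1 ≤ i) := by omega
          have e3 : ¬ (j ≤ K) := by omega
          have e4 : ¬ (j + 1 ≤ K) := by omega
          refine ⟨Guard.top, ∅, ?_, trivial, ?_⟩
          · exact Or.inr ⟨ρ.sym j, by simp [e1, e2, e3, e4]⟩
          · funext x
            simp only [resetVal, Set.mem_empty_iff_false, if_false]
            rw [if_neg e2, if_neg e1]
            show ρ.tm j - ρ.tm i = prevT ρ j - ρ.tm i + (ρ.tm j - prevT ρ j)
            ring
    · -- acceptance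
      intro F hF
      have : F = {(2 : Fin 3)} := hF
      subst this
      refine ⟨2, rfl, fun N => ⟨max N (K+1), le_max_left _ _, ?_⟩⟩
      have h1 : ¬ max N (K+1) ≤ i := by
        have := le_max_right N (K+1); omega
      have h2 : ¬ max N (K+1) ≤ K := by
        have := le_max_right N (K+1); omega
      simp [h1, h2]
end
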